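/- arXiv:0907.1297 — 4 statements merged into one kernel-verified Lean document; each statement's English description precedes it below -/
import Mathlib

section
/- For all nonnegative integers a, b, c, the triple sum ∑_{p=0}^{a} ∑_{q=0}^{b} ∑_{r=0}^{c} 2^{a+b+c−p−q−r} · C(a,p) · C(b,q) · C(c,r) · [(p+2)(q+2)(r+2) − (p+1)(q+1)(r+1)] equals 3^{a+b+c−3} · [(a+6)(b+6)(c+6) − (a+3)(b+3)(c+3)]. -/
/-! Both products in the summand split into factors depending on `p`, `q`, `r` separately, so
the triple sum is a difference of two products of single sums
`∑ₚ 2^(n-p) C(n,p) (p + t) = 3^(n-1) (n + 3t)`, taken at `t = 2` and `t = 1`. This single sum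
is the binomial theorem for `(1 + 2)^n` together with its derivative `n (1 + 2)^(n-1)`. -/

open Finset

theorem Finset.sum_mul_sum_mul_sum {ι κ μ R : Type*} [NonUnitalNonAssocSemiring R]
    (s : Finset ι) (t : Finset κ) (u : Finset μ) (f : ι → R) (g : κ → R) (h : μ → R) :
    (∑ i ∈ s, f i) * (∑ j ∈ t, g j) * ∑ k ∈ u, h k
      = ∑ i ∈ s, ∑ j ∈ t, ∑ k ∈ u, f i * g j * h k := by
  rw [sum_mul_sum, sum_mul]
  simp_rw [sum_mul_sum]

theorem sum_range_mul_pow_mul_pow_mul_choose {R : Type*} [CommSemiring R] (x y : R) (n : ℕ) :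
    ∑ p ∈ range (n + 1), (p : R) * (x ^ p * y ^ (n - p) * n.choose p)
      = n * x * (x + y) ^ (n - 1) := by
  cases n with
  | zero => simp
  | succ m =>
    have hterm : ∀ p ∈ range (m + 1),
        ((p + 1 : ℕ) : R) * (x ^ (p + 1) * y ^ (m + 1 - (p + 1)) * (m + 1).choose (p + 1))
          = (m + 1) * x * (x ^ p * y ^ (m - p) * m.choose p) := by
      intro p _
      have h := congrArg (Nat.cast : ℕ → R) (Nat.add_one_mul_choose_eq m p)
      push_cast at h ⊢
      calc ((p : R) + 1) * (x ^ (p + 1) * y ^ (m - p) * ((m + 1).choose (p + 1) : ℕ))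
          = x * (x ^ p * y ^ (m - p)) * (((m + 1).choose (p + 1) : ℕ) * (p + 1)) := by ring
        _ = (m + 1) * x * (x ^ p * y ^ (m - p) * (m.choose p : ℕ)) := by rw [← h]; ring
    rw [sum_range_succ', sum_congr rfl hterm, ← mul_sum, ← add_pow]
    simp

theorem sum_range_two_pow_mul_choose_mul_add (n : ℕ) (t : ℚ) :
    ∑ p ∈ range (n + 1), (2 : ℚ) ^ (n - p) * n.choose p * (p + t) = 3 ^ n * (n / 3 + t) := by
  have hmean := sum_range_mul_pow_mul_pow_mul_choose (1 : ℚ) 2 n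
  have htotal := add_pow (1 : ℚ) 2 n
  norm_num at hmean htotal
  have hmean_eq : (n : ℚ) * 3 ^ (n - 1) = 3 ^ n * (n / 3) := by
    cases n with
    | zero => simp
    | succ m => rw [pow_succ, Nat.add_sub_cancel]; ring
  calc ∑ p ∈ range (n + 1), (2 : ℚ) ^ (n - p) * n.choose p * (p + t)
      = ∑ p ∈ range (n + 1), (p : ℚ) * (2 ^ (n - p) * n.choose p)
        + t * ∑ p ∈ range (n + 1), (2 : ℚ) ^ (n - p) * n.choose p := by
        rw [mul_sum, ← sum_add_distrib]
        exact sum_congr rfl fun _ _ => by ring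
    _ = 3 ^ n * (n / 3 + t) := by rw [hmean, ← htotal, hmean_eq]; ring

theorem nosegay_rank (a b c : ℕ) :
    ∑ p ∈ Finset.range (a + 1), ∑ q ∈ Finset.range (b + 1), ∑ r ∈ Finset.range (c + 1),
      (2 : ℚ) ^ (a + b + c - p - q - r) * (a.choose p) * (b.choose q) * (c.choose r) *
        (((p : ℚ) + 2) * (q + 2) * (r + 2) - ((p : ℚ) + 1) * (q + 1) * (r + 1))
    = (3 : ℚ) ^ (a + b + c) / 27 *
        (((a : ℚ) + 6) * (b + 6) * (c + 6) - ((a : ℚ) + 3) * (b + 3) * (c + 3)) := by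
  set w : ℕ → ℚ → ℕ → ℚ := fun n t p => 2 ^ (n - p) * n.choose p * (p + t) with hw
  have hsplit : ∀ p ∈ range (a + 1), ∀ q ∈ range (b + 1), ∀ r ∈ range (c + 1),
      (2 : ℚ) ^ (a + b + c - p - q - r) * (a.choose p) * (b.choose q) * (c.choose r) *
        (((p : ℚ) + 2) * (q + 2) * (r + 2) - ((p : ℚ) + 1) * (q + 1) * (r + 1))
      = w a 2 p * w b 2 q * w c 2 r - w a 1 p * w b 1 q * w c 1 r := by
    intro p hp q hq r hr
    rw [mem_range_succ_iff] at hp hq hr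
    rw [show a + b + c - p - q - r = (a - p) + (b - q) + (c - r) by omega, pow_add, pow_add]
    ring
  calc _ = ∑ p ∈ range (a + 1), ∑ q ∈ range (b + 1), ∑ r ∈ range (c + 1),
        (w a 2 p * w b 2 q * w c 2 r - w a 1 p * w b 1 q * w c 1 r) :=
        sum_congr rfl fun p hp => sum_congr rfl fun q hq => sum_congr rfl (hsplit p hp q hq)
    _ = (∑ p ∈ range (a + 1), w a 2 p) * (∑ q ∈ range (b + 1), w b 2 q)
          * (∑ r ∈ range (c + 1), w c 2 r)
        - (∑ p ∈ range (a + 1), w a 1 p) * (∑ q ∈ range (b + 1), w b 1 q)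
          * (∑ r ∈ range (c + 1), w c 1 r) := by
        simp only [sum_sub_distrib, sum_mul_sum_mul_sum]
    _ = _ := by
        simp only [hw, sum_range_two_pow_mul_choose_mul_add, pow_add]
        ring
end

section
/- Let b ≈ 0.573 be the unique positive real root of ln 2 − 2b + ln(b+1) = 0. Then for every integer k ≥ 3 and every real α ≥ 2^k · b, the quantity ln 2 + α·ln(1 − 2^{1−k}) + ln(α/(2^k − 2) + 1) is strictly negative. -/
/-!
Write `K = 2 ^ k` and `t = α / K ≥ b`. The second-order bound `log (1 - x) ≤ -x - x ^ 2 / 2`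
at `x = 2 / K` and the tangent-line bound for the concave `log` at `t + 1` bound the
quantity by `(log 2 - 2 t + log (t + 1)) + (2 t / ((K - 2) (t + 1)) - 2 t / K)`.
The first bracket vanishes at `t = b` and decreases with slope at most `-1`, so it is
at most `b - t ≤ 0`; the second is negative as soon as `(K - 2) t > 2`, which holds
because `K ≥ 8` and the root equation forces `b > 1 / 3`.
-/

open Real

lemma Real.log_le_log_add_sub_div {x y : ℝ} (hx : 0 < x) (hy : 0 < y) :
    log x ≤ log y + (x - y) / y := by
  have h := log_le_sub_one_of_pos (div_pos hx hy)
  rw [log_div hx.ne' hy.ne', div_sub_one hy.ne'] at h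
  linarith

lemma Real.log_one_sub_le_neg_sub_sq_div_two {x : ℝ} (hx₀ : 0 ≤ x) (hx₁ : x < 1) :
    log (1 - x) ≤ -x - x ^ 2 / 2 := by
  have hsum := hasSum_pow_div_log_of_abs_lt_one (abs_lt.mpr ⟨by linarith, hx₁⟩)
  have h := sum_le_hasSum (Finset.range 2) (fun n _ => by positivity) hsum
  norm_num [Finset.sum_range_succ] at h
  linarith

lemma Real.log_add_one_le_log_add_one_add_sub {b t : ℝ} (hb : 0 ≤ b) (hbt : b ≤ t) :
    log (t + 1) ≤ log (b + 1) + (t - b) := by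
  have h := log_le_log_add_sub_div (x := t + 1) (y := b + 1) (by linarith) (by linarith)
  have hdiv : (t + 1 - (b + 1)) / (b + 1) ≤ t - b := by
    rw [div_le_iff₀ (by linarith)]
    nlinarith
  linarith

lemma one_third_lt_of_log_two_sub_two_mul_add_log_eq_zero {b : ℝ} (hb : 0 < b)
    (hroot : log 2 - 2 * b + log (b + 1) = 0) : 1 / 3 < b := by
  have := log_two_gt_d9
  have := log_pos (by linarith : 1 < b + 1)
  linarith

lemma mul_log_one_sub_two_div_le {K α : ℝ} (hK : 2 < K) (hα : 0 ≤ α) :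
    α * log (1 - 2 / K) ≤ -2 * (α / K) - 2 * (α / K) / K := by
  have hK₀ : 0 < K := by linarith
  have hx : 2 / K < 1 := (div_lt_one hK₀).mpr hK
  calc α * log (1 - 2 / K) ≤ α * (-(2 / K) - (2 / K) ^ 2 / 2) :=
        mul_le_mul_of_nonneg_left (log_one_sub_le_neg_sub_sq_div_two (by positivity) hx) hα
    _ = -2 * (α / K) - 2 * (α / K) / K := by field_simp

lemma log_div_sub_two_add_one_le {K α : ℝ} (hK : 2 < K) (hα : 0 ≤ α) :
    log (α / (K - 2) + 1) ≤ log (α / K + 1) + 2 * (α / K) / ((K - 2) * (α / K + 1)) := by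
  have hK₀ : 0 < K := by linarith
  have hK₂ : 0 < K - 2 := by linarith
  have h := log_le_log_add_sub_div (x := α / (K - 2) + 1) (y := α / K + 1)
    (by positivity) (by positivity)
  have hdiff : α / (K - 2) + 1 - (α / K + 1) = 2 * (α / K) / (K - 2) := by
    field_simp; ring
  rwa [hdiff, div_div] at h

theorem log_two_add_mul_log_one_sub_two_div_add_log_lt_zero {b K α : ℝ} (hb : 0 < b)
    (hroot : log 2 - 2 * b + log (b + 1) = 0) (hK : 8 ≤ K) (hα : K * b ≤ α) :
    log 2 + α * log (1 - 2 / K) + log (α / (K - 2) + 1) < 0 := by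
  have hK₀ : 0 < K := by linarith
  have hb₃ := one_third_lt_of_log_two_sub_two_mul_add_log_eq_zero hb hroot
  set t := α / K
  have hbt : b ≤ t := (le_div_iff₀ hK₀).mpr (by linarith)
  have hα₀ : 0 ≤ α := by nlinarith
  have hcorr : 2 * t / ((K - 2) * (t + 1)) < 2 * t / K := by
    have hKt : 2 < (K - 2) * t := by nlinarith
    rw [div_lt_div_iff₀ (by nlinarith) hK₀]
    nlinarith
  have h₁ := mul_log_one_sub_two_div_le (by linarith : 2 < K) hα₀
  have h₂ := log_div_sub_two_add_one_le (by linarith : 2 < K) hα₀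
  have h₃ := log_add_one_le_log_add_one_add_sub hb.le hbt
  linarith

theorem general_k_threshold (b : ℝ) (hb : 0 < b)
    (hroot : Real.log 2 - 2 * b + Real.log (b + 1) = 0)
    (k : ℕ) (hk : 3 ≤ k) (α : ℝ) (hα : 2 ^ k * b ≤ α) :
    Real.log 2 + α * Real.log (1 - (2 : ℝ) ^ (1 - (k : ℤ)))
      + Real.log (α / ((2 : ℝ) ^ k - 2) + 1) < 0 := by
  have hK : (8 : ℝ) ≤ 2 ^ k := by
    calc (8 : ℝ) = 2 ^ 3 := by norm_num
      _ ≤ 2 ^ k := pow_le_pow_right₀ (by norm_num) hk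
  have hzpow : (2 : ℝ) ^ (1 - (k : ℤ)) = 2 / 2 ^ k := by
    rw [zpow_sub₀ two_ne_zero, zpow_one, zpow_natCast]
  rw [hzpow]
  exact log_two_add_mul_log_one_sub_two_div_add_log_lt_zero hb hroot hK hα
end

section
/- For every integer k ≥ 3 and real b > 0 with ln 2 − 2b + ln(b+1) = 0 and 1 − b − 1/(b+1) < −1/8, setting α = 2^k·b we have ln 2 + (α−1)·ln(1 − 2^{1−k}) + ln(2^{−k}α + 1 − 2^{1−k}) < 2^{1−k}·(1 − b − 1/(b+1) + 2^{−k}) < 0. -/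
/-!
Write `ε = 2⁻ᵏ`, so that `2^{1-k} = 2ε` and `εα = b`. The Taylor bound
`log (1 - 2ε) < -2ε - 2ε²` controls the middle term, and concavity of `log` gives
`log (b + 1 - 2ε) ≤ log (b + 1) - 2ε / (b + 1)`. Adding these, the root equation
`log 2 + log (b + 1) = 2b` cancels all terms of order `1`, leaving exactly
`2ε (1 - b - 1 / (b + 1) + ε)`, which is negative because `ε ≤ 1/8`.
-/

open Real

-- The series `-log (1 - x) = ∑ xⁿ⁺¹ / (n + 1)` has nonnegative terms; keep the first three.
lemma Real.log_one_sub_lt_neg_sub_sq_div_two {x : ℝ} (hx₀ : 0 < x) (hx₁ : x < 1) :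
    log (1 - x) < -x - x ^ 2 / 2 := by
  have hseries := hasSum_pow_div_log_of_abs_lt_one (abs_lt.mpr ⟨by linarith, hx₁⟩)
  have hpartial : ∑ n ∈ Finset.range 3, x ^ (n + 1) / (n + 1) ≤ -log (1 - x) :=
    sum_le_hasSum _ (fun n _ => by positivity) hseries
  simp only [Finset.sum_range_succ, Finset.sum_range_zero] at hpartial
  norm_num at hpartial
  nlinarith [pow_pos hx₀ 3]

lemma Real.log_sub_le_log_sub_div {a t : ℝ} (ha : 0 < a) (ht : t < a) :
    log (a - t) ≤ log a - t / a := by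
  have hquot := log_le_sub_one_of_pos (div_pos (sub_pos.mpr ht) ha)
  rw [log_div (sub_pos.mpr ht).ne' ha.ne'] at hquot
  have : (a - t) / a - 1 = -(t / a) := by field_simp; ring
  linarith

lemma two_zpow_neg_le_one_div_eight {k : ℕ} (hk : 3 ≤ k) : (2 : ℝ) ^ (-(k : ℤ)) ≤ 1 / 8 :=
  calc (2 : ℝ) ^ (-(k : ℤ)) ≤ 2 ^ (-3 : ℤ) := zpow_le_zpow_right₀ one_le_two (by omega)
    _ = 1 / 8 := by norm_num

lemma two_zpow_one_sub (k : ℤ) : (2 : ℝ) ^ (1 - k) = 2 * 2 ^ (-k) := by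
  rw [sub_eq_add_neg, zpow_add₀ two_ne_zero, zpow_one]

lemma one_div_eight_lt_of_one_sub_sub_inv_lt {b : ℝ} (hb : 0 < b)
    (h : 1 - b - 1 / (b + 1) < -(1 / 8)) : 1 / 8 < b := by
  have : 1 / (b + 1) < 1 := (div_lt_one (by linarith)).mpr (by linarith)
  linarith

theorem threshold_estimate_chain (k : ℕ) (hk : 3 ≤ k) (b : ℝ) (hb : 0 < b)
    (hroot : Real.log 2 - 2 * b + Real.log (b + 1) = 0)
    (hb' : 1 - b - 1 / (b + 1) < -(1 / 8)) (α : ℝ) (hα : α = 2 ^ k * b) :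
    Real.log 2 + (α - 1) * Real.log (1 - (2 : ℝ) ^ (1 - (k : ℤ)))
        + Real.log ((2 : ℝ) ^ (-(k : ℤ)) * α + 1 - (2 : ℝ) ^ (1 - (k : ℤ)))
      < (2 : ℝ) ^ (1 - (k : ℤ)) * (1 - b - 1 / (b + 1) + (2 : ℝ) ^ (-(k : ℤ))) ∧
    (2 : ℝ) ^ (1 - (k : ℤ)) * (1 - b - 1 / (b + 1) + (2 : ℝ) ^ (-(k : ℤ))) < 0 := by
  rw [two_zpow_one_sub]
  have hεα : (2 : ℝ) ^ (-(k : ℤ)) * α = b := by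
    rw [hα, ← mul_assoc, zpow_neg, zpow_natCast, inv_mul_cancel₀ (by positivity), one_mul]
  set ε : ℝ := (2 : ℝ) ^ (-(k : ℤ))
  have hε : 0 < ε := by positivity
  have hε8 : ε ≤ 1 / 8 := two_zpow_neg_le_one_div_eight hk
  have hb8 : 1 / 8 < b := one_div_eight_lt_of_one_sub_sub_inv_lt hb hb'
  have hα1 : 1 < α := by nlinarith
  have hmiddle : (α - 1) * log (1 - 2 * ε) < (α - 1) * (-(2 * ε) - (2 * ε) ^ 2 / 2) :=
    mul_lt_mul_of_pos_left (log_one_sub_lt_neg_sub_sq_div_two (by positivity) (by linarith))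
      (by linarith)
  have hlast : log (ε * α + 1 - 2 * ε) ≤ log (b + 1) - 2 * ε / (b + 1) := by
    rw [hεα]
    exact log_sub_le_log_sub_div (by linarith) (by linarith)
  have hsum : log 2 + (α - 1) * (-(2 * ε) - (2 * ε) ^ 2 / 2) + (log (b + 1) - 2 * ε / (b + 1))
      = 2 * ε * (1 - b - 1 / (b + 1) + ε) := by
    linear_combination hroot + (-2 - 2 * ε) * hεα
  exact ⟨by linarith, mul_neg_of_pos_of_neg (by positivity) (by linarith)⟩
end

section
/- For all integers k ≥ 2 and vectors of nonnegative integers (d_1, ..., d_k), the identity ∑_{I ⊆ {1,...,k}} (∏_{i∈I} d_i (2^{k-1}−1)^{d_i − 1}) · (∏_{i∉I} (2^{k-1}−1)^{d_i}) · (2^{k−|I|} − 1) = ∏_i (2^{k-1}−1)^{d_i − 1} · [∏_i (d_i + 2(2^{k-1}−1)) − ∏_i (d_i + (2^{k-1}−1))] holds, where for the left side terms with some d_i = 0 and i ∈ I are interpreted as 0 (i.e., the factor is d_i·(2^{k-1}−1)^{d_i−1} with the convention 0·x = 0). -/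
/-!
Write `q = 2^(k-1) - 1`. Since `q ≠ 0`, each factor `q^(d_i)` with `i ∉ I` splits off `q^(d_i - 1)`,
so the `I`-th summand is `∏_i q^(d_i - 1)` times `(∏_{i∈I} d_i) · ((2q)^|Iᶜ| - q^|Iᶜ|)`.
Summing over `I` and expanding `∏_i (d_i + 2q)` and `∏_i (d_i + q)` over subsets gives the identity.
-/

open Finset

variable {ι F : Type*} [Fintype ι] [DecidableEq ι] [Field F]

theorem prod_mul_zpow_sub_one_mul_prod_compl_pow {q : F} (hq : q ≠ 0) (x : ι → F) (d : ι → ℕ)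
    (I : Finset ι) :
    (∏ i ∈ I, x i * q ^ ((d i : ℤ) - 1)) * ∏ i ∈ Iᶜ, q ^ d i
      = (∏ i, q ^ ((d i : ℤ) - 1)) * ((∏ i ∈ I, x i) * ∏ _i ∈ Iᶜ, q) := by
  have hsplit : ∀ i, q ^ d i = q ^ ((d i : ℤ) - 1) * q := fun i => by
    rw [← zpow_natCast, ← zpow_add_one₀ hq, sub_add_cancel]
  simp only [hsplit, prod_mul_distrib]
  rw [← prod_mul_prod_compl I fun i => q ^ ((d i : ℤ) - 1)]
  ring

theorem sum_powerset_prod_mul_pow_card_compl_sub_one (x : ι → F) (q c : F) :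
    ∑ I ∈ (univ : Finset ι).powerset, (∏ i ∈ I, x i) * (∏ _i ∈ Iᶜ, q) * (c ^ #Iᶜ - 1)
      = ∏ i, (x i + c * q) - ∏ i, (x i + q) := by
  rw [prod_add, prod_add, ← sum_sub_distrib]
  refine sum_congr rfl fun I _ => ?_
  rw [← compl_eq_univ_sdiff, prod_const, prod_const, mul_pow]
  ring

theorem nosegay_general_k_rank (k : ℕ) (hk : 2 ≤ k) (d : Fin k → ℕ) :
    ∑ I ∈ (Finset.univ : Finset (Fin k)).powerset,
        (∏ i ∈ I, (d i : ℚ) * ((2 : ℚ) ^ (k - 1) - 1) ^ ((d i : ℤ) - 1)) *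
        (∏ i ∈ Iᶜ, ((2 : ℚ) ^ (k - 1) - 1) ^ (d i)) *
        ((2 : ℚ) ^ (k - I.card) - 1)
      = (∏ i, ((2 : ℚ) ^ (k - 1) - 1) ^ ((d i : ℤ) - 1)) *
        ((∏ i, ((d i : ℚ) + 2 * ((2 : ℚ) ^ (k - 1) - 1)))
          - ∏ i, ((d i : ℚ) + ((2 : ℚ) ^ (k - 1) - 1))) := by
  set q : ℚ := 2 ^ (k - 1) - 1
  have hq : q ≠ 0 := by
    have : (2 : ℚ) ≤ 2 ^ (k - 1) := le_self_pow₀ one_le_two (by omega)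
    exact (by linarith : (0 : ℚ) < q).ne'
  have hcard : ∀ I : Finset (Fin k), k - #I = #Iᶜ := fun I => by
    rw [card_compl, Fintype.card_fin]
  simp only [hcard, prod_mul_zpow_sub_one_mul_prod_compl_pow hq, mul_assoc, ← mul_sum]
  simp only [← mul_assoc, sum_powerset_prod_mul_pow_card_compl_sub_one]
end
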